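/- (Ishihara–Yano) Let J be an almost complex structure and ∇ a connection on ℝ^n. Then the horizontal lift satisfies J^{H,∇}(x,p)² = −Id_{2n} for every (x,p) ∈ ℝ^n × ℝ^n; that is, J^{H,∇} is an almost complex structure on T*ℝ^n. -/
import Mathlib


open Matrix BigOperators

noncomputable section

/-- Symmetrized Christoffel symbols `Γ̃^k_{ij} = (Γ^k_{ij} + Γ^k_{ji})/2`. -/
def symCh {n : ℕ} (Γ : (Fin n → ℝ) → Fin n → Fin n → Fin n → ℝ)
    (x : Fin n → ℝ) (k i j : Fin n) : ℝ :=
  (Γ x k i j + Γ x k j i) / 2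

/-- Lower-left block of the horizontal lift:
`C^i_j(x,p) = p_k (Γ̃^k_{il} J^l_j − Γ̃^k_{jl} J^l_i)`. -/
def Cblock {n : ℕ} (J : (Fin n → ℝ) → Matrix (Fin n) (Fin n) ℝ)
    (Γ : (Fin n → ℝ) → Fin n → Fin n → Fin n → ℝ) (x p : Fin n → ℝ) :
    Matrix (Fin n) (Fin n) ℝ :=
  Matrix.of fun i j =>
    ∑ k, p k * ((∑ l, symCh Γ x k i l * J x l j) - ∑ l, symCh Γ x k j l * J x l i)

/-- The horizontal lift `J^{H,∇}(x,p) = [[J(x), 0], [C(x,p), ᵗJ(x)]]`. -/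
def JH {n : ℕ} (J : (Fin n → ℝ) → Matrix (Fin n) (Fin n) ℝ)
    (Γ : (Fin n → ℝ) → Fin n → Fin n → Fin n → ℝ) (x p : Fin n → ℝ) :
    Matrix (Fin n ⊕ Fin n) (Fin n ⊕ Fin n) ℝ :=
  Matrix.fromBlocks (J x) 0 (Cblock J Γ x p) (J x)ᵀ

/-- Ishihara–Yano: the horizontal lift of an almost complex structure is an
almost complex structure on `T*ℝ^n = ℝ^n × ℝ^n`. -/
theorem statement2 (n : ℕ)
    (J : (Fin n → ℝ) → Matrix (Fin n) (Fin n) ℝ)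
    (Γ : (Fin n → ℝ) → Fin n → Fin n → Fin n → ℝ)
    (hJsmooth : ∀ k j : Fin n, ContDiff ℝ (⊤ : ℕ∞) fun x => J x k j)
    (hΓsmooth : ∀ k i j : Fin n, ContDiff ℝ (⊤ : ℕ∞) fun x => Γ x k i j)
    (hJ : ∀ x, J x * J x = -1) :
    ∀ x p : Fin n → ℝ, JH J Γ x p * JH J Γ x p = -1 := by
  intro x p
  -- symmetric matrices of Christoffel symbols
  set B : Fin n → Matrix (Fin n) (Fin n) ℝ :=
    fun k => Matrix.of fun i l => symCh Γ x k i l with hB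
  have hBsym : ∀ k, (B k)ᵀ = B k := by
    intro k
    ext i l
    simp [hB, Matrix.transpose_apply, symCh]
    ring
  have hCeq : Cblock J Γ x p = ∑ k, p k • (B k * J x - (J x)ᵀ * B k) := by
    ext i j
    simp only [Cblock, Matrix.of_apply, Matrix.sum_apply, Matrix.smul_apply,
      Matrix.sub_apply, Matrix.mul_apply, Matrix.transpose_apply, smul_eq_mul, hB]
    refine Finset.sum_congr rfl fun k _ => ?_
    congr 1
    refine congrArg₂ _ rfl (Finset.sum_congr rfl fun l _ => ?_)
    simp [symCh]
    ring
  have hJT : (J x)ᵀ * (J x)ᵀ = -1 := by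
    calc (J x)ᵀ * (J x)ᵀ = (J x * J x)ᵀ := (Matrix.transpose_mul _ _).symm
    _ = (-1 : Matrix (Fin n) (Fin n) ℝ)ᵀ := by rw [hJ]
    _ = -1 := by simp
  have hC : Cblock J Γ x p * J x + (J x)ᵀ * Cblock J Γ x p = 0 := by
    rw [hCeq, Finset.sum_mul, Finset.mul_sum, ← Finset.sum_add_distrib]
    refine Finset.sum_eq_zero fun k _ => ?_
    rw [smul_mul_assoc, mul_smul_comm, ← smul_add]
    have : (B k * J x - (J x)ᵀ * B k) * J x + (J x)ᵀ * (B k * J x - (J x)ᵀ * B k) = 0 := by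
      rw [sub_mul, mul_sub, mul_assoc, hJ x, ← mul_assoc ((J x)ᵀ) ((J x)ᵀ), hJT]
      noncomm_ring
    rw [this, smul_zero]
  rw [JH, Matrix.fromBlocks_multiply]
  have h0 : Cblock J Γ x p * J x + (J x)ᵀ * Cblock J Γ x p = 0 := hC
  rw [hJ, hJT]
  have hfb : (Matrix.fromBlocks (-1) 0 0 (-1) : Matrix (Fin n ⊕ Fin n) (Fin n ⊕ Fin n) ℝ)
      = -1 := by
    ext i j
    rcases i with i | i <;> rcases j with j | j <;>
      simp [Matrix.fromBlocks, Matrix.one_apply, Sum.elim, Matrix.neg_apply]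
  rw [← hfb]
  congr 1 <;> simp [h0]
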